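/- Let n ≥ 2r, let A = {a_1<⋯<a_r} ∈ Binom([n],r), and let 𝒜 = F(r,n,{A}). Then 𝒜 is intersecting if and only if A ≺ [s, 2s−1] for some s with 1 ≤ s ≤ r. -/

import Mathlib

open Finset

/-- The `i`-th smallest element of a finite set of naturals (1-indexed);
    `0` if out of range. -/
def nthEl (A : Finset ℕ) (i : ℕ) : ℕ := (A.sort (· ≤ ·)).getD (i - 1) 0

/-- `A ≺ C` : `C = {c_1 < ⋯ < c_k}` with `k ≤ |A|` and `a_i ≤ c_i` for `1 ≤ i ≤ k`. -/
def SetPrec (A C : Finset ℕ) : Prop :=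
  C.card ≤ A.card ∧ ∀ i ∈ Finset.Icc 1 C.card, nthEl A i ≤ nthEl C i

instance (A C : Finset ℕ) : Decidable (SetPrec A C) := by
  unfold SetPrec; infer_instance

/-- The compression order: `A ≤ B` for sets of the same size, `a_i ≤ b_i` for all `i`. -/
def SetLE (A B : Finset ℕ) : Prop :=
  A.card = B.card ∧ ∀ i ∈ Finset.Icc 1 A.card, nthEl A i ≤ nthEl B i

instance (A B : Finset ℕ) : Decidable (SetLE A B) := by
  unfold SetLE; infer_instance

/-- `Binom([n], r)`: the family of `r`-element subsets of `[n] = {1, …, n}`. -/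
def binomF (n r : ℕ) : Finset (Finset ℕ) := (Finset.Icc 1 n).powersetCard r

/-- `𝒜(X) = {A ∈ 𝒜 : A ∩ X ≠ ∅}`. -/
def famX (𝒜 : Finset (Finset ℕ)) (X : Finset ℕ) : Finset (Finset ℕ) :=
  𝒜.filter fun A => (A ∩ X).Nonempty

/-- The star `𝒮_{n,r} = {A ∈ Binom([n],r) : 1 ∈ A}`. -/
def starF (n r : ℕ) : Finset (Finset ℕ) := (binomF n r).filter fun A => 1 ∈ A

/-- A family is intersecting if any two members meet. -/
def IntersectingF (𝒜 : Finset (Finset ℕ)) : Prop :=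
  ∀ A ∈ 𝒜, ∀ B ∈ 𝒜, (A ∩ B).Nonempty

/-- A family `𝒜 ⊆ Binom([n],r)` is compressed if `A ∈ 𝒜`, `B ∈ Binom([n],r)`, `B ≤ A`
    imply `B ∈ 𝒜`. -/
def CompressedF (n r : ℕ) (𝒜 : Finset (Finset ℕ)) : Prop :=
  ∀ A ∈ 𝒜, ∀ B ∈ binomF n r, SetLE B A → B ∈ 𝒜

/-- `F(r, n, 𝒢) = {A ∈ Binom([n],r) : A ≺ G for some G ∈ 𝒢}`. -/
def genF (r n : ℕ) (𝒢 : Finset (Finset ℕ)) : Finset (Finset ℕ) :=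
  (binomF n r).filter fun A => ∃ G ∈ 𝒢, SetPrec A G

/-- `𝒜_{n,r,s} = F(r, n, {[s, 2s-1]})`. -/
def Anrs (n r s : ℕ) : Finset (Finset ℕ) := genF r n {Finset.Icc s (2 * s - 1)}

/-- `X ⊆ [2,n]` is EKR for parameters `(n, r)` if `|𝒜(X)| ≤ |𝒮_{n,r}(X)|` for every
    compressed intersecting family `𝒜 ⊆ Binom([n],r)`. -/
def IsEKR (n r : ℕ) (X : Finset ℕ) : Prop :=
  X ⊆ Finset.Icc 2 n ∧
  ∀ 𝒜 ⊆ binomF n r, CompressedF n r 𝒜 → IntersectingF 𝒜 →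
    (famX 𝒜 X).card ≤ (famX (starF n r) X).card

/-- `X` is eventually EKR for `r` if it is EKR for `(n, r)` for all sufficiently large `n`. -/
def EventuallyEKR (r : ℕ) (X : Finset ℕ) : Prop :=
  ∃ N : ℕ, ∀ n ≥ N, IsEKR n r X

/-- `A` and `B` (r-element subsets of `[n]`) are cross intersecting if `C ∩ D ≠ ∅`
    for every `C ≤ A` and `D ≤ B`. -/
def CrossInt (n r : ℕ) (A B : Finset ℕ) : Prop :=
  ∀ C ∈ binomF n r, ∀ D ∈ binomF n r, SetLE C A → SetLE D B → (C ∩ D).Nonempty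

lemma my_sort_eq (B : Finset ℕ) (l : List ℕ) (hs : l.Pairwise (· < ·))
    (hm : ∀ x, x ∈ l ↔ x ∈ B) : B.sort (· ≤ ·) = l := by
  haveI : IsAntisymm ℕ (· < ·) := ⟨fun a b h h' => absurd h' (asymm h)⟩
  refine List.Perm.eq_of_pairwise' (r := (· < ·)) (Finset.sortedLT_sort B).pairwise hs ?_
  refine List.perm_of_nodup_nodup_toFinset_eq (Finset.sort_nodup B _) hs.nodup ?_
  ext x
  simp [Finset.mem_sort, hm]

lemma nthEl_eq_getElem (B : Finset ℕ) (i : ℕ) (h : i - 1 < (B.sort (· ≤ ·)).length) :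
    nthEl B i = (B.sort (· ≤ ·))[i-1] := List.getD_eq_getElem _ _ h

lemma sort_Icc (s : ℕ) (hs : 1 ≤ s) :
    (Finset.Icc s (2*s-1)).sort (· ≤ ·) = List.range' s s := by
  refine my_sort_eq _ _ (List.pairwise_lt_range' (s := s) (n := s)) ?_
  intro x
  rw [List.mem_range'_1, Finset.mem_Icc]
  omega

lemma nthEl_Icc (s i : ℕ) (hs : 1 ≤ s) (h1 : 1 ≤ i) (h2 : i ≤ s) :
    nthEl (Finset.Icc s (2*s-1)) i = s + i - 1 := by
  have hlen : i - 1 < ((Finset.Icc s (2*s-1)).sort (· ≤ ·)).length := by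
    rw [sort_Icc s hs, List.length_range']; omega
  rw [nthEl_eq_getElem _ _ hlen]
  have := sort_Icc s hs
  simp only [this] at hlen ⊢
  rw [List.getElem_range']
  omega

lemma card_Icc_s (s : ℕ) (hs : 1 ≤ s) : (Finset.Icc s (2*s-1)).card = s := by
  rw [Nat.card_Icc]; omega

lemma nthEl_strict (B : Finset ℕ) (i j : ℕ) (h1 : 1 ≤ i) (hij : i < j) (hj : j ≤ B.card) :
    nthEl B i < nthEl B j := by
  have hlen : (B.sort (· ≤ ·)).length = B.card := Finset.length_sort _
  have hi' : i - 1 < (B.sort (· ≤ ·)).length := by omega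
  have hj' : j - 1 < (B.sort (· ≤ ·)).length := by omega
  rw [nthEl_eq_getElem _ _ hi', nthEl_eq_getElem _ _ hj']
  have := (Finset.sortedLT_sort B) (a := ⟨i-1, hi'⟩) (b := ⟨j-1, hj'⟩)
    (by simp [Fin.lt_def]; omega)
  simpa using this

lemma nthEl_gap (B : Finset ℕ) (d : ℕ) : ∀ i, 1 ≤ i → i + d ≤ B.card →
    nthEl B i + d ≤ nthEl B (i + d) := by
  induction d with
  | zero => intro i _ _; simp
  | succ d ih =>
    intro i h1 h2
    have := ih i h1 (by omega)
    have h3 : nthEl B (i + d) < nthEl B (i + d + 1) :=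
      nthEl_strict B (i+d) (i+d+1) (by omega) (by omega) (by omega)
    show nthEl B i + (d+1) ≤ nthEl B (i+d+1)
    omega

lemma nthEl_mem (B : Finset ℕ) (i : ℕ) (h1 : 1 ≤ i) (h2 : i ≤ B.card) : nthEl B i ∈ B := by
  have hlen : (B.sort (· ≤ ·)).length = B.card := Finset.length_sort _
  have hi' : i - 1 < (B.sort (· ≤ ·)).length := by omega
  rw [nthEl_eq_getElem _ _ hi']
  exact (Finset.mem_sort _).mp (List.getElem_mem hi')

/-- first s elements of B are in [1, m] when nthEl B s ≤ m -/
lemma card_inter_lower (B : Finset ℕ) (hB : ∀ x ∈ B, 1 ≤ x) (s m : ℕ)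
    (hs : 1 ≤ s) (hsr : s ≤ B.card) (hm : nthEl B s ≤ m) :
    s ≤ (B ∩ Finset.Icc 1 m).card := by
  classical
  have hlen : (B.sort (· ≤ ·)).length = B.card := Finset.length_sort _
  set l := B.sort (· ≤ ·) with hl
  have hnd : (l.take s).Nodup := (List.take_sublist s l).nodup (Finset.sort_nodup B _)
  have hcard : (l.take s).toFinset.card = s := by
    rw [List.toFinset_card_of_nodup hnd, List.length_take]; omega
  have hsub : (l.take s).toFinset ⊆ B ∩ Finset.Icc 1 m := by
    intro x hx
    rw [List.mem_toFinset] at hx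
    obtain ⟨j, hj, hxe⟩ := List.mem_iff_getElem.mp hx
    rw [List.length_take] at hj
    have hj' : j < l.length := by omega
    have hxl : x = l[j] := by rw [← hxe]; exact List.getElem_take
    have hxB : x ∈ B := by
      rw [hxl]; exact (Finset.mem_sort _).mp (List.getElem_mem hj')
    have hxle : x ≤ nthEl B s := by
      rw [nthEl_eq_getElem B s (by rw [Finset.length_sort]; omega), hxl]
      rcases eq_or_lt_of_le (show j ≤ s - 1 by omega) with h | h
      · subst h; exact le_refl _
      · exact le_of_lt (by
          have := (Finset.sortedLT_sort B) (a := ⟨j, hj'⟩)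
            (b := ⟨s-1, by rw [Finset.length_sort]; omega⟩) (by simp [Fin.lt_def]; omega)
          simpa using this)
    rw [Finset.mem_inter, Finset.mem_Icc]
    exact ⟨hxB, hB x hxB, le_trans hxle hm⟩
  calc s = (l.take s).toFinset.card := hcard.symm
    _ ≤ _ := Finset.card_le_card hsub

lemma prec_iff_nthEl (A : Finset ℕ) (r s : ℕ) (hcard : A.card = r) (hs : 1 ≤ s) (hsr : s ≤ r) :
    SetPrec A (Finset.Icc s (2*s-1)) ↔ nthEl A s ≤ 2*s-1 := by
  constructor
  · rintro ⟨hc, h⟩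
    have := h s (by rw [card_Icc_s s hs]; simp only [Finset.mem_Icc]; omega)
    rw [nthEl_Icc s s hs hs le_rfl] at this
    omega
  · intro h
    refine ⟨by rw [card_Icc_s s hs, hcard]; exact hsr, ?_⟩
    intro i hi
    rw [card_Icc_s s hs, Finset.mem_Icc] at hi
    rw [nthEl_Icc s i hs hi.1 hi.2]
    have hg := nthEl_gap A (s - i) i hi.1 (by omega)
    have h2 : i + (s - i) = s := by omega
    rw [h2] at hg
    omega

/-- Lemma `l.intcond1`: for `n ≥ 2r` and `A ∈ Binom([n],r)`,
`F(r,n,{A})` is intersecting iff `A ≺ [s, 2s−1]` for some `1 ≤ s ≤ r`. -/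
theorem single_generator_intersecting_iff (n r : ℕ) (hn : 2 * r ≤ n)
    (A : Finset ℕ) (hA : A ∈ binomF n r) :
    IntersectingF (genF r n {A}) ↔
      ∃ s : ℕ, 1 ≤ s ∧ s ≤ r ∧ SetPrec A (Finset.Icc s (2 * s - 1)) := by
  classical
  obtain ⟨hAsub, hAcard⟩ := Finset.mem_powersetCard.mp hA
  constructor
  · intro hint
    by_contra hno
    push_neg at hno
    have key : ∀ s, 1 ≤ s → s ≤ r → 2*s ≤ nthEl A s := by
      intro s h1 h2
      by_contra h
      push_neg at h
      exact hno s h1 h2 ((prec_iff_nthEl A r s hAcard h1 h2).mpr (by omega))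
    set C := ((List.range r).map (fun k => 2*k+1)).toFinset with hC
    set D := ((List.range r).map (fun k => 2*k+2)).toFinset with hD
    have memC : ∀ x, x ∈ C ↔ ∃ k < r, 2*k+1 = x := by intro x; simp [hC]
    have memD : ∀ x, x ∈ D ↔ ∃ k < r, 2*k+2 = x := by intro x; simp [hD]
    have sortC : C.sort (· ≤ ·) = (List.range r).map (fun k => 2*k+1) := by
      refine my_sort_eq _ _ ?_ (by intro x; simp [memC])
      rw [List.pairwise_map]
      exact (List.pairwise_lt_range (n := r)).imp (by intro a b h; omega)
    have sortD : D.sort (· ≤ ·) = (List.range r).map (fun k => 2*k+2) := by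
      refine my_sort_eq _ _ ?_ (by intro x; simp [memD])
      rw [List.pairwise_map]
      exact (List.pairwise_lt_range (n := r)).imp (by intro a b h; omega)
    have cardC : C.card = r := by
      rw [hC, List.toFinset_card_of_nodup
        (List.Nodup.map (fun a b h => by omega) (List.nodup_range (n := r)))]
      simp
    have cardD : D.card = r := by
      rw [hD, List.toFinset_card_of_nodup
        (List.Nodup.map (fun a b h => by omega) (List.nodup_range (n := r)))]
      simp
    have nthC : ∀ i, 1 ≤ i → i ≤ r → nthEl C i = 2*i-1 := by
      intro i h1 h2
      have hlen : i - 1 < (C.sort (· ≤ ·)).length := by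
        rw [Finset.length_sort, cardC]; omega
      rw [nthEl_eq_getElem C i hlen]
      simp only [sortC] at hlen ⊢
      rw [List.getElem_map, List.getElem_range]
      omega
    have nthD : ∀ i, 1 ≤ i → i ≤ r → nthEl D i = 2*i := by
      intro i h1 h2
      have hlen : i - 1 < (D.sort (· ≤ ·)).length := by
        rw [Finset.length_sort, cardD]; omega
      rw [nthEl_eq_getElem D i hlen]
      simp only [sortD] at hlen ⊢
      rw [List.getElem_map, List.getElem_range]
      omega
    have hCg : C ∈ genF r n {A} := by
      rw [genF, Finset.mem_filter]
      refine ⟨?_, A, Finset.mem_singleton_self A, ?_⟩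
      · rw [binomF, Finset.mem_powersetCard]
        refine ⟨?_, cardC⟩
        intro x hx
        rw [memC] at hx
        obtain ⟨k, hk, rfl⟩ := hx
        rw [Finset.mem_Icc]; omega
      · refine ⟨by rw [hAcard, cardC], ?_⟩
        intro i hi
        rw [hAcard, Finset.mem_Icc] at hi
        rw [nthC i hi.1 hi.2]
        have := key i hi.1 hi.2
        omega
    have hDg : D ∈ genF r n {A} := by
      rw [genF, Finset.mem_filter]
      refine ⟨?_, A, Finset.mem_singleton_self A, ?_⟩
      · rw [binomF, Finset.mem_powersetCard]
        refine ⟨?_, cardD⟩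
        intro x hx
        rw [memD] at hx
        obtain ⟨k, hk, rfl⟩ := hx
        rw [Finset.mem_Icc]; omega
      · refine ⟨by rw [hAcard, cardD], ?_⟩
        intro i hi
        rw [hAcard, Finset.mem_Icc] at hi
        rw [nthD i hi.1 hi.2]
        have := key i hi.1 hi.2
        omega
    have hdisj : (C ∩ D) = ∅ := by
      rw [Finset.eq_empty_iff_forall_notMem]
      intro x hx
      rw [Finset.mem_inter, memC x, memD x] at hx
      obtain ⟨⟨k, _, hk⟩, ⟨j, _, hj⟩⟩ := hx
      omega
    have := hint C hCg D hDg
    rw [hdisj] at this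
    exact Finset.not_nonempty_empty this
  · rintro ⟨s, hs1, hsr, hprec⟩
    have has : nthEl A s ≤ 2*s-1 := (prec_iff_nthEl A r s hAcard hs1 hsr).mp hprec
    intro B hB C hC
    rw [genF, Finset.mem_filter] at hB hC
    obtain ⟨hBbin, G, hG, hBprec⟩ := hB
    rw [Finset.mem_singleton] at hG; subst hG
    obtain ⟨hCbin, G', hG', hCprec⟩ := hC
    rw [Finset.mem_singleton] at hG'; subst hG'
    obtain ⟨hBsub, hBcard⟩ := Finset.mem_powersetCard.mp hBbin
    obtain ⟨hCsub, hCcard⟩ := Finset.mem_powersetCard.mp hCbin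
    have hBs : nthEl B s ≤ 2*s-1 := by
      have := hBprec.2 s (by rw [hAcard]; simp only [Finset.mem_Icc]; omega)
      omega
    have hCs : nthEl C s ≤ 2*s-1 := by
      have := hCprec.2 s (by rw [hAcard]; simp only [Finset.mem_Icc]; omega)
      omega
    have cB := card_inter_lower B (fun x hx => (Finset.mem_Icc.mp (hBsub hx)).1)
      s (2*s-1) hs1 (by omega) hBs
    have cC := card_inter_lower C (fun x hx => (Finset.mem_Icc.mp (hCsub hx)).1)
      s (2*s-1) hs1 (by omega) hCs
    set I := Finset.Icc 1 (2*s-1) with hI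
    have hu : (B ∩ I) ∪ (C ∩ I) ⊆ I := by
      intro x hx
      rcases Finset.mem_union.mp hx with h | h <;> exact (Finset.mem_inter.mp h).2
    have hie := Finset.card_inter_add_card_union (B ∩ I) (C ∩ I)
    have hcu : ((B ∩ I) ∪ (C ∩ I)).card ≤ 2*s-1 :=
      le_trans (Finset.card_le_card hu) (by rw [hI, Nat.card_Icc]; omega)
    have hpos : 0 < ((B ∩ I) ∩ (C ∩ I)).card := by omega
    obtain ⟨x, hx⟩ := Finset.card_pos.mp hpos
    rw [Finset.mem_inter] at hx
    exact ⟨x, Finset.mem_inter.mpr ⟨(Finset.mem_inter.mp hx.1).1, (Finset.mem_inter.mp hx.2).1⟩⟩
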